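/- arXiv:2104.10225 — 4 statements merged into one kernel-verified Lean document; each statement's English description precedes it below -/
import Mathlib

section
/- Let $(w_t)_{0\le t\le T}$ be a Brownian motion with augmented natural filtration $(\mathcal{F}_t)$. Let $(\eta_t)_{0\le t\le T}$ be a square-integrable progressively measurable process that is an Itô process, i.e. $\eta_t = \eta_0 + \int_0^t \alpha_s\,ds + \int_0^t \beta_s\,dw_s$ with adapted square-integrable $\alpha,\beta$. Then there exists a square-integrable absolutely continuous (possibly non-adapted) process $(\xi_t)$ such that $\eta_t = \mathbb{E}[\xi_t \mid \mathcal{F}_t]$ for all $t$; one may take $\xi_t = \eta_0 + \int_0^T \beta_s\,dw_s + \int_0^t \alpha_s\,ds$. -/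
open MeasureTheory ProbabilityTheory Filter Set

variable {Ω : Type*}

/-- `w` is a standard Brownian motion with respect to the filtration `F`
on the probability space `(Ω, P)`. -/
structure IsBM {mΩ : MeasurableSpace Ω} (P : Measure Ω) (F : Filtration ℝ mΩ)
    (w : ℝ → Ω → ℝ) : Prop where
  adapted : Adapted F w
  cont : ∀ ω, Continuous fun t => w t ω
  start : ∀ᵐ ω ∂P, w 0 ω = 0
  indep : ∀ s t : ℝ, 0 ≤ s → s ≤ t →
    Indep (MeasurableSpace.comap (fun ω => w t ω - w s ω) inferInstance) (F s) P
  gauss : ∀ s t : ℝ, 0 ≤ s → s ≤ t →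
    Measure.map (fun ω => w t ω - w s ω) P = gaussianReal 0 (Real.toNNReal (t - s))

/-- A process `v` is square integrable on `[0,T] × Ω`, i.e. `𝔼 ∫_0^T v_s² ds < ∞`. -/
def SqInt {mΩ : MeasurableSpace Ω} (P : Measure Ω) (T : ℝ) (v : ℝ → Ω → ℝ) : Prop :=
  Integrable (fun p : ℝ × Ω => (v p.1 p.2)^2) ((volume.restrict (Set.Ioc 0 T)).prod P)

/- Up to a null set, `ξ_t = (η_t - B_t) + B_T`; the first summand is `F_t`-measurable and the
martingale property turns `B_T` into `B_t` under conditioning on `F_t`. -/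

theorem MeasureTheory.Martingale.condExp_add_ae_eq {ι E : Type*} [Preorder ι]
    [NormedAddCommGroup E] [NormedSpace ℝ E] [CompleteSpace E]
    {m : MeasurableSpace Ω} {μ : Measure Ω} {ℱ : Filtration ι m} {f : ι → Ω → E}
    (hf : Martingale f ℱ μ) {i j : ι} (hij : i ≤ j) [SigmaFinite (μ.trim (ℱ.le i))]
    {g : Ω → E} (hg : StronglyMeasurable[ℱ i] g) (hg_int : Integrable g μ) :
    μ[g + f j|ℱ i] =ᵐ[μ] g + f i := by
  refine (condExp_add hg_int (hf.integrable j) _).trans ?_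
  rw [condExp_of_stronglyMeasurable (ℱ.le i) hg hg_int]
  exact (hf.condExp_ae_eq hij).add_left

theorem ito_process_is_projection_of_absolutely_continuous_general
    {mΩ : MeasurableSpace Ω} (P : Measure Ω) [IsProbabilityMeasure P]
    (F : Filtration ℝ mΩ) (T : ℝ)
    (η α B : ℝ → Ω → ℝ)
    (hηprog : ProgMeasurable F η) (hη2 : ∀ t, MemLp (η t) 2 P)
    -- `B t = ∫_0^t β_s dw_s`: an `L²` martingale vanishing at `0`
    (hBmart : Martingale B F P)
    (hB2 : ∀ t, MemLp (B t) 2 P)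
    (hη : ∀ t ∈ Set.Icc (0:ℝ) T,
      η t =ᵐ[P] fun ω => η 0 ω + (∫ s in (0:ℝ)..t, α s ω) + B t ω) :
    ∃ ξ : ℝ → Ω → ℝ,
      (∀ t ω, ξ t ω = η 0 ω + B T ω + ∫ s in (0:ℝ)..t, α s ω)
      ∧ MemLp (ξ 0) 2 P
      ∧ ∀ t ∈ Set.Icc (0:ℝ) T, η t =ᵐ[P] P[ξ t|F t] := by
  set ξ : ℝ → Ω → ℝ := fun t ω => η 0 ω + B T ω + ∫ s in (0:ℝ)..t, α s ω
  refine ⟨ξ, fun _ _ => rfl, ?_, fun t ht => ?_⟩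
  · simp only [ξ, intervalIntegral.integral_same, add_zero]
    exact (hη2 0).add (hB2 T)
  have hξ : ξ t =ᵐ[P] (η t - B t) + B T := by
    filter_upwards [hη t ht] with ω hω
    simp only [ξ, Pi.add_apply, Pi.sub_apply, hω]
    ring
  have h_meas : StronglyMeasurable[F t] (η t - B t) :=
    (IsStronglyProgressive.stronglyAdapted hηprog t).sub (hBmart.stronglyAdapted t)
  have h_int : Integrable (η t - B t) P :=
    ((hη2 t).integrable one_le_two).sub (hBmart.integrable t)
  calc η t = (η t - B t) + B t := (sub_add_cancel _ _).symm
    _ =ᵐ[P] P[(η t - B t) + B T|F t] := (hBmart.condExp_add_ae_eq ht.2 h_meas h_int).symm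
    _ =ᵐ[P] P[ξ t|F t] := condExp_congr_ae hξ.symm

/-- If `η` is a square-integrable progressively measurable Itô process,
`η_t = η_0 + ∫_0^t α_s ds + ∫_0^t β_s dw_s` (where `B t = ∫_0^t β_s dw_s` is the Itô
integral of `β`: an `L²` martingale vanishing at `0`), then there exists a
square-integrable absolutely continuous (possibly non-adapted) process `ξ` with
`η_t = 𝔼[ξ_t | F_t]` for all `t ∈ [0,T]`; one may take
`ξ_t = η_0 + ∫_0^T β_s dw_s + ∫_0^t α_s ds`. -/
theorem ito_process_is_projection_of_absolutely_continuous
    {mΩ : MeasurableSpace Ω} (P : Measure Ω) [IsProbabilityMeasure P]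
    (F : Filtration ℝ mΩ) (w : ℝ → Ω → ℝ) (T : ℝ) (hT : 0 < T)
    (hw : IsBM P F w)
    (η α β B : ℝ → Ω → ℝ)
    (hηprog : ProgMeasurable F η) (hη2 : ∀ t, MemLp (η t) 2 P)
    (hαprog : ProgMeasurable F α) (hα2 : SqInt P T α)
    (hβprog : ProgMeasurable F β) (hβ2 : SqInt P T β)
    -- `B t = ∫_0^t β_s dw_s`: an `L²` martingale vanishing at `0`
    (hBmart : Martingale B F P) (hB0 : B 0 =ᵐ[P] fun _ => 0)
    (hB2 : ∀ t, MemLp (B t) 2 P)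
    (hη : ∀ t ∈ Set.Icc (0:ℝ) T,
      η t =ᵐ[P] fun ω => η 0 ω + (∫ s in (0:ℝ)..t, α s ω) + B t ω) :
    ∃ ξ : ℝ → Ω → ℝ,
      (∀ t ω, ξ t ω = η 0 ω + B T ω + ∫ s in (0:ℝ)..t, α s ω)
      ∧ MemLp (ξ 0) 2 P
      ∧ ∀ t ∈ Set.Icc (0:ℝ) T, η t =ᵐ[P] P[ξ t|F t] :=
  ito_process_is_projection_of_absolutely_continuous_general P F T η α B hηprog hη2 hBmart hB2 hη
end

section
/- Let $(w_t)_{0\le t\le T}$ be a Brownian motion with augmented natural filtration $(\mathcal{F}_t)$, and let $(\xi_t)_{0\le t\le T}$ be a square-integrable absolutely continuous process, $\xi_t = \xi_0 + \int_0^t \zeta_s\,ds$ with $\zeta$ measurable and square integrable. Define $M_t = \mathbb{E}[\xi_t\mid\mathcal{F}_t] - \mathbb{E}[\xi_0\mid\mathcal{F}_0] - \int_0^t \mathbb{E}[\zeta_r \mid \mathcal{F}_r]\,dr$. Then $(M_t)_{0\le t\le T}$ is an $(\mathcal{F}_t)$-martingale. -/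
/-!
Write `M_t = M_s + (𝔼[ξ_t|F_t] - 𝔼[ξ_s|F_s] - ∫_s^t ζbar_r dr)`. Conditioning on `F_s`, the
tower property gives `𝔼[𝔼[ξ_t|F_t]|F_s] = 𝔼[ξ_s|F_s] + 𝔼[∫_s^t ζ_r dr|F_s]` and
`𝔼[ζbar_r|F_s] = 𝔼[ζ_r|F_s]` for `r ≥ s`, and Fubini lets conditional expectation pass through
the time integral, so the bracket has conditional mean zero.

What remains is that `M_s` is `F_s`-measurable, i.e. that `∫_0^s ζbar_r dr` is, although each
`ζbar_r` is only a.e. equal to an `F_r`-measurable function. This follows by testing against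
indicators: for `A` measurable, `∫_A ζbar_r = ∫ ζbar_r 𝔼[1_A|F_s]` for every `r ≤ s`, and
integrating in `r` shows that `∫_0^s ζbar_r dr` and its conditional expectation have the same
integral over every `A`. Integrability of `ζbar` on `[0,T] × Ω` comes from the `L¹`-contraction
of conditional expectation.
-/

open MeasureTheory ProbabilityTheory Filter Set

variable {Ω : Type*}

open Function

section CondExpFubini

variable {ι : Type*} [MeasurableSpace ι] {μ : Measure ι}
  {m mΩ : MeasurableSpace Ω} {P : Measure Ω}

lemma integral_mul_indicator_one (f : Ω → ℝ) {A : Set Ω} (hA : MeasurableSet A) :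
    ∫ ω, f ω * A.indicator 1 ω ∂P = ∫ ω in A, f ω ∂P := by
  rw [← integral_indicator hA]
  congr 1 with ω
  by_cases hω : ω ∈ A <;> simp [hω]

lemma norm_indicator_one_le (A : Set Ω) (ω : Ω) : ‖A.indicator (1 : Ω → ℝ) ω‖ ≤ 1 :=
  (norm_indicator_le_norm_self _ _).trans_eq (by simp)

lemma ae_norm_condExp_indicator_one_le (A : Set Ω) :
    ∀ᵐ ω ∂P, ‖P[A.indicator (1 : Ω → ℝ)|m] ω‖ ≤ 1 :=
  ae_bdd_norm_condExp_of_ae_bdd_norm (ae_of_all _ (norm_indicator_one_le A))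

lemma setIntegral_condExp_eq_integral_mul_condExp_indicator [IsFiniteMeasure P] (hm : m ≤ mΩ)
    {X : Ω → ℝ} (hX : Integrable X P) {A : Set Ω} (hA : MeasurableSet A) :
    ∫ ω in A, P[X|m] ω ∂P = ∫ ω, X ω * P[A.indicator 1|m] ω ∂P := by
  set φ : Ω → ℝ := P[A.indicator 1|m]
  have hind : Integrable (A.indicator (1 : Ω → ℝ)) P := (integrable_const 1).indicator hA
  calc ∫ ω in A, P[X|m] ω ∂P = ∫ ω, P[X|m] ω * A.indicator 1 ω ∂P :=
        (integral_mul_indicator_one _ hA).symm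
    _ = ∫ ω, P[P[X|m] * A.indicator 1|m] ω ∂P := (integral_condExp hm).symm
    _ = ∫ ω, P[X|m] ω * φ ω ∂P := integral_congr_ae <|
        condExp_mul_of_stronglyMeasurable_left stronglyMeasurable_condExp
          (integrable_condExp.mul_bdd (measurable_const.indicator hA).aestronglyMeasurable
            (ae_of_all _ (norm_indicator_one_le A))) hind
    _ = ∫ ω, P[X * φ|m] ω ∂P := integral_congr_ae <|
        (condExp_mul_of_stronglyMeasurable_right stronglyMeasurable_condExp
          (hX.mul_bdd (stronglyMeasurable_condExp.mono hm).aestronglyMeasurable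
            (ae_norm_condExp_indicator_one_le A)) hX).symm
    _ = ∫ ω, X ω * φ ω ∂P := integral_condExp hm

lemma integral_integral_mul_swap [SFinite μ] [SFinite P] {f : ι → Ω → ℝ}
    (hf : Integrable (uncurry f) (μ.prod P)) {φ : Ω → ℝ} (hφ : AEStronglyMeasurable φ P)
    {C : ℝ} (hφC : ∀ᵐ ω ∂P, ‖φ ω‖ ≤ C) :
    ∫ ω, (∫ i, f i ω ∂μ) * φ ω ∂P = ∫ i, ∫ ω, f i ω * φ ω ∂P ∂μ := by
  have hfφ : Integrable (uncurry fun i ω => f i ω * φ ω) (μ.prod P) :=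
    hf.mul_bdd hφ.comp_snd (Measure.quasiMeasurePreserving_snd.ae hφC)
  simp_rw [← integral_mul_const]
  exact (integral_integral_swap hfφ).symm

lemma setIntegral_integral_swap [SFinite μ] [SFinite P] {f : ι → Ω → ℝ}
    (hf : Integrable (uncurry f) (μ.prod P)) {A : Set Ω} (hA : MeasurableSet A) :
    ∫ ω in A, ∫ i, f i ω ∂μ ∂P = ∫ i, ∫ ω in A, f i ω ∂P ∂μ := by
  simp_rw [← integral_mul_indicator_one _ hA]
  exact integral_integral_mul_swap hf (measurable_const.indicator hA).aestronglyMeasurable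
    (ae_of_all _ (norm_indicator_one_le A))

lemma condExp_integral_congr [SFinite μ] [IsFiniteMeasure P] (hm : m ≤ mΩ) {f g : ι → Ω → ℝ}
    (hf : Integrable (uncurry f) (μ.prod P)) (hg : Integrable (uncurry g) (μ.prod P))
    (hfg : ∀ᵐ i ∂μ, P[f i|m] =ᵐ[P] P[g i|m]) :
    P[fun ω => ∫ i, f i ω ∂μ|m] =ᵐ[P] P[fun ω => ∫ i, g i ω ∂μ|m] := by
  have hf' : Integrable (fun ω => ∫ i, f i ω ∂μ) P := hf.integral_prod_right
  have hg' : Integrable (fun ω => ∫ i, g i ω ∂μ) P := hg.integral_prod_right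
  refine ae_eq_condExp_of_forall_setIntegral_eq (g := P[fun ω => ∫ i, f i ω ∂μ|m]) hm hg'
    (fun _ _ _ => integrable_condExp.integrableOn) (fun A hA _ => ?_)
    stronglyMeasurable_condExp.aestronglyMeasurable
  have hswap : ∀ {h : ι → Ω → ℝ}, Integrable (uncurry h) (μ.prod P) →
      ∫ ω in A, ∫ i, h i ω ∂μ ∂P = ∫ i, ∫ ω in A, P[h i|m] ω ∂P ∂μ := fun {h} hh => by
    rw [setIntegral_integral_swap hh (hm A hA)]
    refine integral_congr_ae ?_
    filter_upwards [hh.prod_right_ae] with i hi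
    exact (setIntegral_condExp hm hi hA).symm
  rw [setIntegral_condExp hm hf' hA, hswap hf, hswap hg]
  refine integral_congr_ae ?_
  filter_upwards [hfg] with i hi
  exact setIntegral_congr_ae (hm A hA) (hi.mono fun _ h _ => h)

lemma aestronglyMeasurable_integral_of_ae [SFinite μ] [IsFiniteMeasure P] (hm : m ≤ mΩ)
    {f : ι → Ω → ℝ}
    (hf : Integrable (uncurry f) (μ.prod P)) (hfm : ∀ᵐ i ∂μ, AEStronglyMeasurable[m] (f i) P) :
    AEStronglyMeasurable[m] (fun ω => ∫ i, f i ω ∂μ) P := by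
  have hN : Integrable (fun ω => ∫ i, f i ω ∂μ) P := hf.integral_prod_right
  refine (stronglyMeasurable_condExp (f := fun ω => ∫ i, f i ω ∂μ)).aestronglyMeasurable.congr
    (ae_eq_of_forall_setIntegral_eq_of_sigmaFinite (fun _ _ _ => integrable_condExp.integrableOn)
      (fun _ _ _ => hN.integrableOn) fun A hA _ => ?_)
  calc ∫ ω in A, P[fun ω => ∫ i, f i ω ∂μ|m] ω ∂P
      = ∫ ω, (∫ i, f i ω ∂μ) * P[A.indicator 1|m] ω ∂P :=
        setIntegral_condExp_eq_integral_mul_condExp_indicator hm hN hA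
    _ = ∫ i, ∫ ω, f i ω * P[A.indicator 1|m] ω ∂P ∂μ :=
        integral_integral_mul_swap hf
          (stronglyMeasurable_condExp.mono hm).aestronglyMeasurable
          (ae_norm_condExp_indicator_one_le A)
    _ = ∫ i, ∫ ω in A, f i ω ∂P ∂μ := by
        refine integral_congr_ae ?_
        filter_upwards [hfm, hf.prod_right_ae] with i hfim (hfi : Integrable (f i) P)
        rw [← setIntegral_condExp_eq_integral_mul_condExp_indicator hm hfi hA]
        exact setIntegral_congr_ae hA
          ((condExp_of_aestronglyMeasurable' hm hfim hfi).mono fun _ h _ => h)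
    _ = ∫ ω in A, ∫ i, f i ω ∂μ ∂P := (setIntegral_integral_swap hf hA).symm

lemma integrable_uncurry_of_ae_eq_condExp [SFinite P] {m : ι → MeasurableSpace Ω}
    {f g : ι → Ω → ℝ}
    (hf : Integrable (uncurry f) (μ.prod P)) (hg : AEStronglyMeasurable (uncurry g) (μ.prod P))
    (hgf : ∀ᵐ i ∂μ, g i =ᵐ[P] P[f i|m i]) :
    Integrable (uncurry g) (μ.prod P) := by
  refine (integrable_prod_iff hg).2 ⟨hgf.mono fun i hi => integrable_condExp.congr hi.symm,
    hf.integral_norm_prod_left.mono' hg.norm.integral_prod_right' ?_⟩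
  filter_upwards [hgf] with i hi
  rw [Real.norm_of_nonneg (integral_nonneg fun _ => norm_nonneg _)]
  change ∫ ω, ‖g i ω‖ ∂P ≤ ∫ ω, ‖f i ω‖ ∂P
  rw [integral_congr_ae (hi.mono fun ω hω => congrArg norm hω)]
  exact integral_abs_condExp_le (f i)

end CondExpFubini

lemma MeasureTheory.Integrable.prod_restrict_mono {ι : Type*} [MeasurableSpace ι] {μ : Measure ι}
    {mΩ : MeasurableSpace Ω} {P : Measure Ω} [SFinite P] {s t : Set ι} {f : ι × Ω → ℝ}
    (hf : Integrable f ((μ.restrict t).prod P)) (hst : s ⊆ t) :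
    Integrable f ((μ.restrict s).prod P) :=
  hf.mono_measure (Measure.prod_mono (Measure.restrict_mono hst le_rfl) le_rfl)

lemma SqInt.integrable {mΩ : MeasurableSpace Ω} {P : Measure Ω} [IsFiniteMeasure P] {T : ℝ}
    {f : ℝ → Ω → ℝ} (hf : SqInt P T f) (hfm : Measurable (uncurry f)) :
    Integrable (uncurry f) ((volume.restrict (Ioc 0 T)).prod P) := by
  have : IsFiniteMeasure (volume.restrict (Ioc (0 : ℝ) T)) := ⟨by simp⟩
  exact ((memLp_two_iff_integrable_sq hfm.aestronglyMeasurable).2 hf).integrable one_le_two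

section IntervalIntegral

variable {mΩ : MeasurableSpace Ω} {P : Measure Ω} [SFinite P] {f : ℝ → Ω → ℝ}

lemma integrable_intervalIntegral {s t a b : ℝ}
    (hf : Integrable (uncurry f) ((volume.restrict (Ioc s t)).prod P)) (hab : a ≤ b)
    (hsub : Ioc a b ⊆ Ioc s t) :
    Integrable (fun ω => ∫ r in a..b, f r ω) P := by
  simp_rw [intervalIntegral.integral_of_le hab]
  exact (hf.prod_restrict_mono hsub).integral_prod_right

lemma ae_intervalIntegral_add_adjacent_intervals {a b c : ℝ}
    (hf : Integrable (uncurry f) ((volume.restrict (Ioc a c)).prod P)) (hab : a ≤ b)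
    (hbc : b ≤ c) :
    ∀ᵐ ω ∂P, (∫ r in a..b, f r ω) + ∫ r in b..c, f r ω = ∫ r in a..c, f r ω := by
  filter_upwards [hf.prod_left_ae] with ω (hω : IntegrableOn (f · ω) (Ioc a c))
  exact intervalIntegral.integral_add_adjacent_intervals
    ((intervalIntegrable_iff_integrableOn_Ioc_of_le hab).2
      (hω.mono_set (Ioc_subset_Ioc le_rfl hbc)))
    ((intervalIntegrable_iff_integrableOn_Ioc_of_le hbc).2
      (hω.mono_set (Ioc_subset_Ioc hab le_rfl)))

end IntervalIntegral

section ProjectedProcess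

variable {mΩ : MeasurableSpace Ω} {P : Measure Ω} [IsFiniteMeasure P] {F : Filtration ℝ mΩ}
  {ξ ζ ζbar : ℝ → Ω → ℝ} {s t T : ℝ}

noncomputable def projectedMartingalePart (P : Measure Ω) (F : Filtration ℝ mΩ)
    (ξ ζbar : ℝ → Ω → ℝ) (t : ℝ) : Ω → ℝ :=
  fun ω => P[ξ t|F t] ω - P[ξ 0|F 0] ω - ∫ r in (0 : ℝ)..t, ζbar r ω

noncomputable def projectedIncrement (P : Measure Ω) (F : Filtration ℝ mΩ)
    (ξ ζbar : ℝ → Ω → ℝ) (s t : ℝ) : Ω → ℝ :=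
  fun ω => P[ξ t|F t] ω - P[ξ s|F s] ω - ∫ r in s..t, ζbar r ω

lemma integrable_projectedMartingalePart
    (hζbar : Integrable (uncurry ζbar) ((volume.restrict (Ioc 0 T)).prod P))
    (ht : t ∈ Icc 0 T) :
    Integrable (projectedMartingalePart P F ξ ζbar t) P :=
  (integrable_condExp.sub integrable_condExp).sub
    (integrable_intervalIntegral hζbar ht.1 (Ioc_subset_Ioc le_rfl ht.2))

lemma aestronglyMeasurable_projectedMartingalePart
    (hζbar_int : Integrable (uncurry ζbar) ((volume.restrict (Ioc 0 T)).prod P))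
    (hζbar : ∀ r ∈ Icc 0 T, ζbar r =ᵐ[P] P[ζ r|F r]) (hs : s ∈ Icc 0 T) :
    AEStronglyMeasurable[F s] (projectedMartingalePart P F ξ ζbar s) P := by
  refine (stronglyMeasurable_condExp.aestronglyMeasurable.sub
    (stronglyMeasurable_condExp.mono (F.mono hs.1)).aestronglyMeasurable).sub ?_
  simp_rw [intervalIntegral.integral_of_le hs.1]
  refine aestronglyMeasurable_integral_of_ae (F.le s)
    (hζbar_int.prod_restrict_mono (Ioc_subset_Ioc le_rfl hs.2)) ?_
  filter_upwards [ae_restrict_mem measurableSet_Ioc] with r hr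
  exact (stronglyMeasurable_condExp.mono (F.mono hr.2)).aestronglyMeasurable.congr
    (hζbar r ⟨hr.1.le, hr.2.trans hs.2⟩).symm

lemma condExp_projectedIncrement_eq_zero (hst : s ≤ t) (hξs : Integrable (ξ s) P)
    (hξ : ξ t =ᵐ[P] fun ω => ξ s ω + ∫ r in s..t, ζ r ω)
    (hζ_int : Integrable (uncurry ζ) ((volume.restrict (Ioc s t)).prod P))
    (hζbar_int : Integrable (uncurry ζbar) ((volume.restrict (Ioc s t)).prod P))
    (hζbar : ∀ r ∈ Ioc s t, ζbar r =ᵐ[P] P[ζ r|F r]) :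
    P[projectedIncrement P F ξ ζbar s t|F s] =ᵐ[P] 0 := by
  have hζ_st := integrable_intervalIntegral hζ_int hst subset_rfl
  have hζbar_st := integrable_intervalIntegral hζbar_int hst subset_rfl
  have hξt : P[P[ξ t|F t]|F s] =ᵐ[P] P[ξ s|F s] + P[fun ω => ∫ r in s..t, ζ r ω|F s] :=
    (condExp_condExp_of_le (F.mono hst) (F.le t)).trans
      ((condExp_congr_ae hξ).trans (condExp_add hξs hζ_st _))
  have hξs : P[P[ξ s|F s]|F s] =ᵐ[P] P[ξ s|F s] := condExp_condExp_of_le le_rfl (F.le s)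
  have hdrift : P[fun ω => ∫ r in s..t, ζbar r ω|F s]
      =ᵐ[P] P[fun ω => ∫ r in s..t, ζ r ω|F s] := by
    simp_rw [intervalIntegral.integral_of_le hst]
    refine condExp_integral_congr (F.le s) hζbar_int hζ_int ?_
    filter_upwards [ae_restrict_mem measurableSet_Ioc] with r hr
    exact (condExp_congr_ae (hζbar r hr)).trans
      (condExp_condExp_of_le (F.mono hr.1.le) (F.le r))
  have hlin : P[projectedIncrement P F ξ ζbar s t|F s]
      =ᵐ[P] P[P[ξ t|F t]|F s] - P[P[ξ s|F s]|F s] - P[fun ω => ∫ r in s..t, ζbar r ω|F s] :=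
    (condExp_sub (integrable_condExp.sub integrable_condExp) hζbar_st _).trans
      ((condExp_sub integrable_condExp integrable_condExp _).sub EventuallyEq.rfl)
  filter_upwards [hlin, hξt, hξs, hdrift] with ω h₁ h₂ h₃ h₄
  simp only [h₁, Pi.sub_apply, h₂, Pi.add_apply, h₃, h₄, Pi.zero_apply]
  ring

lemma ae_eq_add_intervalIntegral
    (hξ : ∀ ω, ∀ t ∈ Icc 0 T, ξ t ω = ξ 0 ω + ∫ r in (0 : ℝ)..t, ζ r ω)
    (hζ_int : Integrable (uncurry ζ) ((volume.restrict (Ioc 0 T)).prod P))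
    (h0s : 0 ≤ s) (hst : s ≤ t) (htT : t ≤ T) :
    ξ t =ᵐ[P] fun ω => ξ s ω + ∫ r in s..t, ζ r ω := by
  filter_upwards [ae_intervalIntegral_add_adjacent_intervals
    (hζ_int.prod_restrict_mono (Ioc_subset_Ioc le_rfl htT)) h0s hst] with ω hω
  rw [hξ ω t ⟨h0s.trans hst, htT⟩, hξ ω s ⟨h0s, hst.trans htT⟩, ← hω, add_assoc]

lemma condExp_projectedMartingalePart (hξ0 : Integrable (ξ 0) P)
    (hξ : ∀ ω, ∀ t ∈ Icc 0 T, ξ t ω = ξ 0 ω + ∫ r in (0 : ℝ)..t, ζ r ω)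
    (hζ_int : Integrable (uncurry ζ) ((volume.restrict (Ioc 0 T)).prod P))
    (hζbar_int : Integrable (uncurry ζbar) ((volume.restrict (Ioc 0 T)).prod P))
    (hζbar : ∀ r ∈ Icc 0 T, ζbar r =ᵐ[P] P[ζ r|F r]) (h0s : 0 ≤ s) (hst : s ≤ t) (htT : t ≤ T) :
    P[projectedMartingalePart P F ξ ζbar t|F s] =ᵐ[P] projectedMartingalePart P F ξ ζbar s := by
  have hs : s ∈ Icc 0 T := ⟨h0s, hst.trans htT⟩
  have hsub : Ioc s t ⊆ Ioc 0 T := Ioc_subset_Ioc h0s htT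
  have hξs : Integrable (ξ s) P := by
    rw [show ξ s = fun ω => ξ 0 ω + ∫ r in (0 : ℝ)..s, ζ r ω from funext (hξ · s hs)]
    exact hξ0.add (integrable_intervalIntegral hζ_int h0s (Ioc_subset_Ioc le_rfl hs.2))
  have hsplit : projectedMartingalePart P F ξ ζbar t
      =ᵐ[P] projectedMartingalePart P F ξ ζbar s + projectedIncrement P F ξ ζbar s t := by
    filter_upwards [ae_intervalIntegral_add_adjacent_intervals
      (hζbar_int.prod_restrict_mono (Ioc_subset_Ioc le_rfl htT)) h0s hst] with ω hω
    simp only [projectedMartingalePart, projectedIncrement, Pi.add_apply, ← hω]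
    ring
  calc P[projectedMartingalePart P F ξ ζbar t|F s]
      =ᵐ[P] P[projectedMartingalePart P F ξ ζbar s|F s] +
        P[projectedIncrement P F ξ ζbar s t|F s] :=
        (condExp_congr_ae hsplit).trans
          (condExp_add (integrable_projectedMartingalePart hζbar_int hs)
            ((integrable_condExp.sub integrable_condExp).sub
              (integrable_intervalIntegral hζbar_int hst hsub)) _)
    _ =ᵐ[P] projectedMartingalePart P F ξ ζbar s + 0 :=
        (condExp_of_aestronglyMeasurable' (F.le s)
          (aestronglyMeasurable_projectedMartingalePart hζbar_int hζbar hs)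
          (integrable_projectedMartingalePart hζbar_int hs)).add
        (condExp_projectedIncrement_eq_zero hst hξs
          (ae_eq_add_intervalIntegral hξ hζ_int h0s hst htT)
          (hζ_int.prod_restrict_mono hsub) (hζbar_int.prod_restrict_mono hsub)
          fun r hr => hζbar r (Ioc_subset_Icc_self (hsub hr)))
    _ = projectedMartingalePart P F ξ ζbar s := add_zero _

end ProjectedProcess

theorem martingale_part_of_projected_absolutely_continuous_process_general
    {mΩ : MeasurableSpace Ω} (P : Measure Ω) [IsProbabilityMeasure P]
    (F : Filtration ℝ mΩ) (T : ℝ)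
    (ξ ζ : ℝ → Ω → ℝ)
    (hζm : Measurable (Function.uncurry ζ)) (hζ2 : SqInt P T ζ)
    (hξ0 : MemLp (ξ 0) 2 P)
    (hξ : ∀ ω : Ω, ∀ t ∈ Set.Icc (0:ℝ) T, ξ t ω = ξ 0 ω + ∫ s in (0:ℝ)..t, ζ s ω)
    (ζbar : ℝ → Ω → ℝ) (hζbarm : Measurable (Function.uncurry ζbar))
    (hζbar : ∀ r ∈ Set.Icc (0:ℝ) T, ζbar r =ᵐ[P] P[ζ r|F r]) :
    (∀ t ∈ Set.Icc (0:ℝ) T,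
      Integrable (fun ω => (P[ξ t|F t]) ω - (P[ξ 0|F 0]) ω - ∫ r in (0:ℝ)..t, ζbar r ω) P)
    ∧ ∀ s t : ℝ, 0 ≤ s → s ≤ t → t ≤ T →
        P[(fun ω => (P[ξ t|F t]) ω - (P[ξ 0|F 0]) ω - ∫ r in (0:ℝ)..t, ζbar r ω)|F s]
          =ᵐ[P] fun ω => (P[ξ s|F s]) ω - (P[ξ 0|F 0]) ω - ∫ r in (0:ℝ)..s, ζbar r ω := by
  have hζ_int := hζ2.integrable hζm
  have hζbar_int : Integrable (uncurry ζbar) ((volume.restrict (Ioc 0 T)).prod P) :=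
    integrable_uncurry_of_ae_eq_condExp hζ_int hζbarm.aestronglyMeasurable <|
      (ae_restrict_mem measurableSet_Ioc).mono fun r hr => hζbar r (Ioc_subset_Icc_self hr)
  exact ⟨fun t ht => integrable_projectedMartingalePart hζbar_int ht,
    fun s t h0s hst htT => condExp_projectedMartingalePart (hξ0.integrable one_le_two) hξ hζ_int
      hζbar_int hζbar h0s hst htT⟩

/-- For a square-integrable absolutely continuous process
`ξ_t = ξ_0 + ∫_0^t ζ_s ds`, the process
`M_t = 𝔼[ξ_t|F_t] - 𝔼[ξ_0|F_0] - ∫_0^t 𝔼[ζ_r|F_r] dr` is an `(F_t)`-martingale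
(each `M_t` is integrable and `𝔼[M_t|F_s] = M_s` a.s. for `0 ≤ s ≤ t ≤ T`);
here `ζbar` is a jointly measurable version of `r ↦ 𝔼[ζ_r|F_r]`. -/
theorem martingale_part_of_projected_absolutely_continuous_process
    {mΩ : MeasurableSpace Ω} (P : Measure Ω) [IsProbabilityMeasure P]
    (F : Filtration ℝ mΩ) (w : ℝ → Ω → ℝ) (T : ℝ) (hT : 0 < T)
    (hw : IsBM P F w)
    (ξ ζ : ℝ → Ω → ℝ)
    (hζm : Measurable (Function.uncurry ζ)) (hζ2 : SqInt P T ζ)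
    (hξ0 : MemLp (ξ 0) 2 P)
    (hξ : ∀ ω : Ω, ∀ t ∈ Set.Icc (0:ℝ) T, ξ t ω = ξ 0 ω + ∫ s in (0:ℝ)..t, ζ s ω)
    (ζbar : ℝ → Ω → ℝ) (hζbarm : Measurable (Function.uncurry ζbar))
    (hζbar : ∀ r ∈ Set.Icc (0:ℝ) T, ζbar r =ᵐ[P] P[ζ r|F r]) :
    (∀ t ∈ Set.Icc (0:ℝ) T,
      Integrable (fun ω => (P[ξ t|F t]) ω - (P[ξ 0|F 0]) ω - ∫ r in (0:ℝ)..t, ζbar r ω) P)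
    ∧ ∀ s t : ℝ, 0 ≤ s → s ≤ t → t ≤ T →
        P[(fun ω => (P[ξ t|F t]) ω - (P[ξ 0|F 0]) ω - ∫ r in (0:ℝ)..t, ζbar r ω)|F s]
          =ᵐ[P] fun ω => (P[ξ s|F s]) ω - (P[ξ 0|F 0]) ω - ∫ r in (0:ℝ)..s, ζbar r ω :=
  martingale_part_of_projected_absolutely_continuous_process_general P F T ξ ζ hζm hζ2 hξ0 hξ ζbar
    hζbarm hζbar
end

section
/- Let $(w_t)$ be a Brownian motion on $[0,T]$ with natural filtration, and suppose $\xi_t = \mathbb{E}[\xi_t] + \int_0^T g_{t,s}\,dw_s$ and $\zeta_t = \mathbb{E}[\zeta_t] + \int_0^T h_{t,s}\,dw_s$ with $g_t, h_t$ progressively measurable square-integrable, where $\xi_t = \xi_0 + \int_0^t \zeta_r\,dr$. Then for each $t\in[0,T]$, $g_{t,\cdot} = g_{0,\cdot} + \int_0^t h_{r,\cdot}\,dr$ as elements of $L^2(\Omega\times[0,T])$; in particular, for almost every $s$ the map $t \mapsto g_{t,s}$ has a continuous modification. -/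
open MeasureTheory ProbabilityTheory Filter Set

variable {Ω : Type*}

/-- An abstract Itô stochastic integral operator for the Brownian motion `w` on `[0,T]`:
`toFun v t` represents `∫_0^t v_s dw_s`.  The listed properties (values on elementary
predictable integrands, linearity, the Itô isometry, square integrability and the
martingale property) characterize the Itô integral of progressively measurable
square-integrable integrands uniquely up to null sets. -/
structure ItoIntegral {mΩ : MeasurableSpace Ω} (P : Measure Ω) (F : Filtration ℝ mΩ)
    (w : ℝ → Ω → ℝ) (T : ℝ) where
  toFun : (ℝ → Ω → ℝ) → ℝ → Ω → ℝ
  elem : ∀ (a b : ℝ) (X : Ω → ℝ), 0 ≤ a → a ≤ b → b ≤ T →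
    StronglyMeasurable[F a] X → MemLp X 2 P →
    ∀ t ω, toFun (fun s ω' => if s ∈ Set.Ioc a b then X ω' else 0) t ω
      = X ω * (w (min t b) ω - w (min t a) ω)
  add : ∀ u v : ℝ → Ω → ℝ, ProgMeasurable F u → SqInt P T u →
    ProgMeasurable F v → SqInt P T v → ∀ t : ℝ,
      toFun (fun s ω => u s ω + v s ω) t =ᵐ[P] fun ω => toFun u t ω + toFun v t ω
  smul : ∀ (c : ℝ) (v : ℝ → Ω → ℝ), ProgMeasurable F v → SqInt P T v → ∀ t : ℝ,
      toFun (fun s ω => c * v s ω) t =ᵐ[P] fun ω => c * toFun v t ω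
  isometry : ∀ v : ℝ → Ω → ℝ, ProgMeasurable F v → SqInt P T v → ∀ t ∈ Set.Icc (0:ℝ) T,
      ∫ ω, (toFun v t ω)^2 ∂P
        = ∫ p, (v p.1 p.2)^2 ∂((volume.restrict (Set.Ioc 0 t)).prod P)
  sqIntegrable : ∀ v : ℝ → Ω → ℝ, ProgMeasurable F v → SqInt P T v → ∀ t : ℝ,
      MemLp (toFun v t) 2 P
  martingale : ∀ v : ℝ → Ω → ℝ, ProgMeasurable F v → SqInt P T v →
    ∀ s t : ℝ, 0 ≤ s → s ≤ t → t ≤ T → P[toFun v t|F s] =ᵐ[P] toFun v s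
  start : ∀ v : ℝ → Ω → ℝ, toFun v 0 =ᵐ[P] fun _ => 0

/-!
Write `D = g_t - g_0` and `K = ∫_0^t h_r dr`. For a progressive square-integrable `v`, the
polarised Itô isometry and `𝔼 ∫ v dw = 0` turn the representations into
`⟪v, g_τ⟫ = 𝔼[(∫ v dw) ξ_τ]` and `⟪v, h_r⟫ = 𝔼[(∫ v dw) ζ_r]`, so by Fubini
`⟪v, K⟫ = 𝔼[(∫ v dw) (ξ_t - ξ_0)] = ⟪v, D⟫`. As `K` need not be progressive, we cannot take
`v = D - K`; instead `v = D` and `v = h_r` (with Fubini once more) give `⟪D, K⟫ = ‖D‖²` and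
`‖K‖² = ⟪D, K⟫`, whence `‖D - K‖² = 0`. Continuity in `t` is that of the primitive of an
integrable function.
-/

section SquareIntegrable
variable {α β : Type*} {mα : MeasurableSpace α} {mβ : MeasurableSpace β}
  {μ : Measure α} {ν : Measure β}

lemma sq_integral_le_measureReal_univ_mul_integral_sq [IsFiniteMeasure μ] {f : α → ℝ}
    (hf : MemLp f 2 μ) : (∫ x, f x ∂μ) ^ 2 ≤ μ.real univ * ∫ x, f x ^ 2 ∂μ := by
  set a := μ.real univ
  set m := ∫ x, f x ∂μ
  have hquad : Integrable (fun x => a ^ 2 * f x ^ 2 - 2 * a * m * f x) μ :=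
    (hf.integrable_sq.const_mul _).sub ((hf.integrable one_le_two).const_mul _)
  have hexpand : ∫ x, (a * f x - m) ^ 2 ∂μ = a * (a * ∫ x, f x ^ 2 ∂μ - m ^ 2) := by
    have hpoint : ∀ x, (a * f x - m) ^ 2 = a ^ 2 * f x ^ 2 - 2 * a * m * f x + m ^ 2 :=
      fun x => by ring
    simp_rw [hpoint]
    rw [integral_add hquad (integrable_const _), integral_sub (hf.integrable_sq.const_mul _)
      ((hf.integrable one_le_two).const_mul _), integral_const_mul, integral_const_mul,
      integral_const, smul_eq_mul]
    ring
  have hnonneg : 0 ≤ a * (a * ∫ x, f x ^ 2 ∂μ - m ^ 2) :=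
    hexpand ▸ integral_nonneg fun x => sq_nonneg _
  rcases (measureReal_nonneg : 0 ≤ a).eq_or_lt with ha | ha
  · have : μ = 0 := by simpa [a, measureReal_def, ENNReal.toReal_eq_zero_iff] using ha.symm
    simp [m, this]
  · nlinarith

lemma ae_eq_of_integral_mul_eq {D K : α → ℝ} (hD : MemLp D 2 μ) (hK : MemLp K 2 μ)
    (hDK : ∫ x, D x * K x ∂μ = ∫ x, D x * D x ∂μ)
    (hKK : ∫ x, K x * K x ∂μ = ∫ x, D x * K x ∂μ) : D =ᵐ[μ] K := by
  have hexpand : ∀ x, (D x - K x) ^ 2 = D x * D x - 2 * (D x * K x) + K x * K x :=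
    fun x => by ring
  have iDD : Integrable (fun x => D x * D x) μ := hD.integrable_mul hD
  have iDK : Integrable (fun x => D x * K x) μ := hD.integrable_mul hK
  have iKK : Integrable (fun x => K x * K x) μ := hK.integrable_mul hK
  have hzero : ∫ x, (D x - K x) ^ 2 ∂μ = 0 := by
    simp_rw [hexpand]
    rw [integral_add (f := fun x => D x * D x - 2 * (D x * K x)) (iDD.sub (iDK.const_mul 2)) iKK,
      integral_sub iDD (iDK.const_mul 2), integral_const_mul]
    linarith
  filter_upwards [(integral_eq_zero_iff_of_nonneg (fun x => sq_nonneg (D x - K x))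
    (hD.sub hK).integrable_sq).1 hzero] with x hx
  exact sub_eq_zero.1 (pow_eq_zero_iff two_ne_zero |>.1 hx)

lemma integral_add_sq {f g : α → ℝ} (hf : MemLp f 2 μ) (hg : MemLp g 2 μ) :
    ∫ x, (f x + g x) ^ 2 ∂μ = ∫ x, f x ^ 2 ∂μ + 2 * ∫ x, f x * g x ∂μ + ∫ x, g x ^ 2 ∂μ := by
  have hexpand : ∀ x, (f x + g x) ^ 2 = f x ^ 2 + 2 * (f x * g x) + g x ^ 2 := fun x => by ring
  have ifg : Integrable (fun x => f x * g x) μ := hf.integrable_mul hg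
  simp_rw [hexpand]
  rw [integral_add (f := fun x => f x ^ 2 + 2 * (f x * g x))
    (hf.integrable_sq.add (ifg.const_mul 2)) hg.integrable_sq,
    integral_add hf.integrable_sq (ifg.const_mul 2), integral_const_mul]

variable [IsFiniteMeasure μ] [IsFiniteMeasure ν] {H : β → α → ℝ}

lemma memLp_two_integral_left (hH : MemLp (Function.uncurry H) 2 (ν.prod μ)) :
    MemLp (fun x => ∫ r, H r x ∂ν) 2 μ := by
  have hmeas : AEStronglyMeasurable (fun x => ∫ r, H r x ∂ν) μ :=
    hH.1.prod_swap.integral_prod_right'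
  have hsections : ∀ᵐ x ∂μ, MemLp (fun r => H r x) 2 ν := by
    filter_upwards [hH.1.prodMk_right, hH.integrable_sq.prod_left_ae] with x hxm hx2
    exact (memLp_two_iff_integrable_sq hxm).2 hx2
  refine (memLp_two_iff_integrable_sq hmeas).2 <|
    ((hH.integrable_sq.swap.integral_prod_left).const_mul (ν.real univ)).mono'
      (hmeas.pow 2) ?_
  filter_upwards [hsections] with x hx
  rw [Real.norm_eq_abs, abs_of_nonneg (sq_nonneg _)]
  exact sq_integral_le_measureReal_univ_mul_integral_sq hx

lemma integral_mul_integral_eq_integral_integral_mul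
    (hH : MemLp (Function.uncurry H) 2 (ν.prod μ)) {f : α → ℝ} (hf : MemLp f 2 μ) :
    ∫ x, f x * (∫ r, H r x ∂ν) ∂μ = ∫ r, ∫ x, f x * H r x ∂μ ∂ν := by
  have hint : Integrable (Function.uncurry fun r x => f x * H r x) (ν.prod μ) :=
    (hf.comp_snd ν).integrable_mul hH
  simp_rw [← integral_const_mul]
  exact (integral_integral_swap hint).symm

end SquareIntegrable

lemma ae_continuousOn_primitive {α : Type*} {mα : MeasurableSpace α} {μ : Measure α} [SFinite μ]
    {T : ℝ} (hT : 0 ≤ T) {H : ℝ → α → ℝ}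
    (hH : Integrable (Function.uncurry H) ((volume.restrict (Ioc 0 T)).prod μ)) :
    ∀ᵐ x ∂μ, ContinuousOn (fun t => ∫ r in 0..t, H r x) (Icc 0 T) := by
  filter_upwards [hH.prod_left_ae] with x hx
  have hx' : IntervalIntegrable (fun r => H r x) volume 0 T :=
    (intervalIntegrable_iff_integrableOn_Ioc_of_le hT).2 hx
  simpa only [uIcc_of_le hT] using
    intervalIntegral.continuousOn_primitive_interval' hx' left_mem_uIcc

lemma MeasureTheory.IsStronglyProgressive.aestronglyMeasurable_uncurry {mΩ : MeasurableSpace Ω}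
    {P : Measure Ω} [SFinite P] {F : Filtration ℝ mΩ} {ρ : Measure ℝ} [SFinite ρ] {s : Set ℝ}
    {T : ℝ} (hs : MeasurableSet s) (hsT : s ⊆ Iic T) {u : ℝ → Ω → ℝ}
    (hu : IsStronglyProgressive F u) :
    AEStronglyMeasurable (Function.uncurry u) ((ρ.restrict s).prod P) := by
  have hclip :
      Measurable fun p : ℝ × Ω => (⟨min p.1 T, mem_Iic.2 (min_le_right _ _)⟩ : Iic T) :=
    (measurable_fst.min measurable_const).subtype_mk
  have hstopped : StronglyMeasurable fun p : ℝ × Ω => u (min p.1 T) p.2 :=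
    (hu T).comp_measurable (hclip.prodMk (measurable_snd.mono le_rfl (F.le T)))
  refine hstopped.aestronglyMeasurable.congr ?_
  rw [Measure.restrict_prod_eq_prod_univ]
  filter_upwards [ae_restrict_mem (hs.prod MeasurableSet.univ)] with p hp
  rw [min_eq_left (hsT hp.1)]
  rfl

lemma SqInt.mono {mΩ : MeasurableSpace Ω} {P : Measure Ω} [SFinite P] {T t : ℝ} {v : ℝ → Ω → ℝ}
    (hv : SqInt P T v) (htT : t ≤ T) : SqInt P t v :=
  hv.mono_measure <| by
    rw [Measure.restrict_prod_eq_prod_univ, Measure.restrict_prod_eq_prod_univ]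
    exact Measure.restrict_mono (prod_mono_left (Ioc_subset_Ioc_right htT)) le_rfl

lemma SqInt.memLp {mΩ : MeasurableSpace Ω} {P : Measure Ω} [SFinite P] {F : Filtration ℝ mΩ}
    {T : ℝ} {v : ℝ → Ω → ℝ} (hv : IsStronglyProgressive F v) (hv2 : SqInt P T v) :
    MemLp (fun p : ℝ × Ω => v p.1 p.2) 2 ((volume.restrict (Ioc 0 T)).prod P) :=
  (memLp_two_iff_integrable_sq
    (hv.aestronglyMeasurable_uncurry measurableSet_Ioc Ioc_subset_Iic_self)).2 hv2

namespace ItoIntegral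

variable {mΩ : MeasurableSpace Ω} {P : Measure Ω} [IsFiniteMeasure P] {F : Filtration ℝ mΩ}
  {w : ℝ → Ω → ℝ} {T : ℝ} (I : ItoIntegral P F w T) {u v : ℝ → Ω → ℝ}

lemma integral_toFun_eq_zero (hT : 0 ≤ T) (hv : IsStronglyProgressive F v) (hv2 : SqInt P T v) :
    ∫ ω, I.toFun v T ω ∂P = 0 := by
  rw [← integral_condExp (F.le 0),
    integral_congr_ae (I.martingale v hv hv2 0 T le_rfl hT le_rfl),
    integral_congr_ae (I.start v), integral_zero]

lemma integral_toFun_mul_toFun (hT : 0 ≤ T) (hu : IsStronglyProgressive F u) (hu2 : SqInt P T u)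
    (hv : IsStronglyProgressive F v) (hv2 : SqInt P T v) :
    ∫ ω, I.toFun u T ω * I.toFun v T ω ∂P
      = ∫ p, u p.1 p.2 * v p.1 p.2 ∂((volume.restrict (Ioc 0 T)).prod P) := by
  have hT' : T ∈ Icc 0 T := ⟨hT, le_rfl⟩
  have hX := I.sqIntegrable u hu hu2 T
  have hY := I.sqIntegrable v hv hv2 T
  have hu' := SqInt.memLp hu hu2
  have hv' := SqInt.memLp hv hv2
  have hsum : ∫ ω, (I.toFun u T ω + I.toFun v T ω) ^ 2 ∂P
      = ∫ p, (u p.1 p.2 + v p.1 p.2) ^ 2 ∂((volume.restrict (Ioc 0 T)).prod P) := by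
    rw [← I.isometry _ (hu.add hv) (hu'.add hv').integrable_sq T hT']
    refine integral_congr_ae ?_
    filter_upwards [I.add u v hu hu2 hv hv2 T] with ω hω
    rw [hω]
  rw [integral_add_sq hX hY, integral_add_sq hu' hv', I.isometry u hu hu2 T hT',
    I.isometry v hv hv2 T hT'] at hsum
  linarith

lemma memLp_of_ae_eq_add_toFun (hv : IsStronglyProgressive F v) (hv2 : SqInt P T v) {X : Ω → ℝ}
    {c : ℝ} (hX : X =ᵐ[P] fun ω => c + I.toFun v T ω) : MemLp X 2 P :=
  ((memLp_const c).add (I.sqIntegrable v hv hv2 T)).ae_eq hX.symm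

lemma integral_toFun_mul_of_ae_eq (hT : 0 ≤ T) (hu : IsStronglyProgressive F u)
    (hu2 : SqInt P T u) (hv : IsStronglyProgressive F v) (hv2 : SqInt P T v) {X : Ω → ℝ} {c : ℝ}
    (hX : X =ᵐ[P] fun ω => c + I.toFun u T ω) :
    ∫ ω, I.toFun v T ω * X ω ∂P
      = ∫ p, v p.1 p.2 * u p.1 p.2 ∂((volume.restrict (Ioc 0 T)).prod P) := by
  have hY := I.sqIntegrable v hv hv2 T
  calc ∫ ω, I.toFun v T ω * X ω ∂P
      = ∫ ω, c * I.toFun v T ω + I.toFun v T ω * I.toFun u T ω ∂P := by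
        refine integral_congr_ae ?_
        filter_upwards [hX] with ω hω
        rw [hω]
        ring
    _ = c * ∫ ω, I.toFun v T ω ∂P + ∫ ω, I.toFun v T ω * I.toFun u T ω ∂P := by
        rw [integral_add (g := fun ω => I.toFun v T ω * I.toFun u T ω)
          ((hY.integrable one_le_two).const_mul c) (hY.integrable_mul (I.sqIntegrable u hu hu2 T)),
          integral_const_mul]
    _ = _ := by
        rw [I.integral_toFun_eq_zero hT hv hv2, I.integral_toFun_mul_toFun hT hv hv2 hu hu2,
          mul_zero, zero_add]

end ItoIntegral

section KernelRepresentation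

variable {mΩ : MeasurableSpace Ω} {P : Measure Ω} [IsFiniteMeasure P] {F : Filtration ℝ mΩ}
  {w : ℝ → Ω → ℝ} {T : ℝ} {ξ ζ : ℝ → Ω → ℝ} {g h : ℝ → ℝ → Ω → ℝ}

lemma integral_mul_kernel_sub_eq (I : ItoIntegral P F w T) {t : ℝ} (ht : t ∈ Icc 0 T)
    (hζm : Measurable (Function.uncurry ζ)) (hζ2 : SqInt P T ζ)
    (hξ : ∀ ω : Ω, ∀ t ∈ Icc (0:ℝ) T, ξ t ω = ξ 0 ω + ∫ r in (0:ℝ)..t, ζ r ω)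
    (hg : ∀ t ∈ Icc (0:ℝ) T, IsStronglyProgressive F (g t) ∧ SqInt P T (g t))
    (hh : ∀ t ∈ Icc (0:ℝ) T, IsStronglyProgressive F (h t) ∧ SqInt P T (h t))
    (hgrep : ∀ t ∈ Icc (0:ℝ) T, ξ t =ᵐ[P] fun ω => (∫ x, ξ t x ∂P) + I.toFun (g t) T ω)
    (hhrep : ∀ t ∈ Icc (0:ℝ) T, ζ t =ᵐ[P] fun ω => (∫ x, ζ t x ∂P) + I.toFun (h t) T ω)
    {v : ℝ → Ω → ℝ} (hv : IsStronglyProgressive F v) (hv2 : SqInt P T v) :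
    ∫ p, v p.1 p.2 * (g t p.1 p.2 - g 0 p.1 p.2) ∂((volume.restrict (Ioc 0 T)).prod P)
      = ∫ r in Ioc 0 t, ∫ p, v p.1 p.2 * h r p.1 p.2 ∂((volume.restrict (Ioc 0 T)).prod P) := by
  have hT : 0 ≤ T := ht.1.trans ht.2
  have h0 : (0:ℝ) ∈ Icc 0 T := ⟨le_rfl, hT⟩
  have hY := I.sqIntegrable v hv hv2 T
  have hYξ : ∀ τ ∈ Icc (0:ℝ) T, Integrable (fun ω => I.toFun v T ω * ξ τ ω) P :=
    fun τ hτ => hY.integrable_mul (I.memLp_of_ae_eq_add_toFun (hg τ hτ).1 (hg τ hτ).2 (hgrep τ hτ))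
  have hgL2 : ∀ τ ∈ Icc (0:ℝ) T, Integrable (fun p : ℝ × Ω => v p.1 p.2 * g τ p.1 p.2)
      ((volume.restrict (Ioc 0 T)).prod P) := fun τ hτ =>
    (SqInt.memLp hv hv2).integrable_mul (SqInt.memLp (hg τ hτ).1 (hg τ hτ).2)
  have hζL2 : MemLp (Function.uncurry ζ) 2 ((volume.restrict (Ioc 0 t)).prod P) :=
    (memLp_two_iff_integrable_sq hζm.aestronglyMeasurable).2 (hζ2.mono ht.2)
  calc ∫ p, v p.1 p.2 * (g t p.1 p.2 - g 0 p.1 p.2) ∂((volume.restrict (Ioc 0 T)).prod P)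
      = ∫ ω, I.toFun v T ω * ξ t ω ∂P - ∫ ω, I.toFun v T ω * ξ 0 ω ∂P := by
        simp_rw [mul_sub]
        rw [integral_sub (hgL2 t ht) (hgL2 0 h0),
          I.integral_toFun_mul_of_ae_eq hT (hg t ht).1 (hg t ht).2 hv hv2 (hgrep t ht),
          I.integral_toFun_mul_of_ae_eq hT (hg 0 h0).1 (hg 0 h0).2 hv hv2 (hgrep 0 h0)]
    _ = ∫ ω, I.toFun v T ω * (∫ r in Ioc 0 t, ζ r ω) ∂P := by
        rw [← integral_sub (hYξ t ht) (hYξ 0 h0)]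
        refine integral_congr_ae (Eventually.of_forall fun ω => ?_)
        simp only [hξ ω t ht, intervalIntegral.integral_of_le ht.1]
        ring
    _ = ∫ r in Ioc 0 t, ∫ ω, I.toFun v T ω * ζ r ω ∂P :=
        integral_mul_integral_eq_integral_integral_mul hζL2 hY
    _ = _ := setIntegral_congr_fun measurableSet_Ioc fun r hr =>
        I.integral_toFun_mul_of_ae_eq hT (hh r ⟨hr.1.le, hr.2.trans ht.2⟩).1
          (hh r ⟨hr.1.le, hr.2.trans ht.2⟩).2 hv hv2 (hhrep r ⟨hr.1.le, hr.2.trans ht.2⟩)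

lemma kernel_sub_ae_eq_integral (I : ItoIntegral P F w T) {t : ℝ} (ht : t ∈ Icc 0 T)
    (hζm : Measurable (Function.uncurry ζ)) (hζ2 : SqInt P T ζ)
    (hξ : ∀ ω : Ω, ∀ t ∈ Icc (0:ℝ) T, ξ t ω = ξ 0 ω + ∫ r in (0:ℝ)..t, ζ r ω)
    (hhm : Measurable fun q : ℝ × ℝ × Ω => h q.1 q.2.1 q.2.2)
    (hg : ∀ t ∈ Icc (0:ℝ) T, IsStronglyProgressive F (g t) ∧ SqInt P T (g t))
    (hh : ∀ t ∈ Icc (0:ℝ) T, IsStronglyProgressive F (h t) ∧ SqInt P T (h t))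
    (hh2 : SqInt ((volume.restrict (Ioc 0 T)).prod P) T fun r p => h r p.1 p.2)
    (hgrep : ∀ t ∈ Icc (0:ℝ) T, ξ t =ᵐ[P] fun ω => (∫ x, ξ t x ∂P) + I.toFun (g t) T ω)
    (hhrep : ∀ t ∈ Icc (0:ℝ) T, ζ t =ᵐ[P] fun ω => (∫ x, ζ t x ∂P) + I.toFun (h t) T ω) :
    (fun p : ℝ × Ω => g t p.1 p.2 - g 0 p.1 p.2)
      =ᵐ[(volume.restrict (Ioc 0 T)).prod P] fun p => ∫ r in Ioc 0 t, h r p.1 p.2 := by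
  have h0 : (0:ℝ) ∈ Icc 0 T := ⟨le_rfl, ht.1.trans ht.2⟩
  have hr : ∀ r ∈ Ioc 0 t, r ∈ Icc 0 T := fun r hr => ⟨hr.1.le, hr.2.trans ht.2⟩
  have hD : MemLp (fun p : ℝ × Ω => g t p.1 p.2 - g 0 p.1 p.2) 2
      ((volume.restrict (Ioc 0 T)).prod P) :=
    (SqInt.memLp (hg t ht).1 (hg t ht).2).sub (SqInt.memLp (hg 0 h0).1 (hg 0 h0).2)
  have hH : MemLp (Function.uncurry fun r (p : ℝ × Ω) => h r p.1 p.2) 2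
      ((volume.restrict (Ioc 0 t)).prod ((volume.restrict (Ioc 0 T)).prod P)) :=
    (memLp_two_iff_integrable_sq hhm.aestronglyMeasurable).2 (hh2.mono ht.2)
  have hK := memLp_two_integral_left hH
  have horth : ∀ v : ℝ → Ω → ℝ, IsStronglyProgressive F v → SqInt P T v →
      ∫ p, v p.1 p.2 * (∫ r in Ioc 0 t, h r p.1 p.2) ∂((volume.restrict (Ioc 0 T)).prod P)
        = ∫ p, v p.1 p.2 * (g t p.1 p.2 - g 0 p.1 p.2) ∂((volume.restrict (Ioc 0 T)).prod P) :=
    fun v hv hv2 => by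
      rw [integral_mul_integral_eq_integral_integral_mul hH (SqInt.memLp hv hv2),
        integral_mul_kernel_sub_eq I ht hζm hζ2 hξ hg hh hgrep hhrep hv hv2]
  refine ae_eq_of_integral_mul_eq hD hK
    (horth _ ((hg t ht).1.sub (hg 0 h0).1) hD.integrable_sq) ?_
  rw [integral_mul_integral_eq_integral_integral_mul hH hK,
    integral_mul_integral_eq_integral_integral_mul hH hD]
  refine setIntegral_congr_fun measurableSet_Ioc fun r hrt => ?_
  simp only [mul_comm _ (h r _ _)]
  exact horth (h r) (hh r (hr r hrt)).1 (hh r (hr r hrt)).2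

end KernelRepresentation

theorem representation_kernel_regularity_general
    {mΩ : MeasurableSpace Ω} (P : Measure Ω) [IsProbabilityMeasure P]
    (F : Filtration ℝ mΩ) (w : ℝ → Ω → ℝ) (T : ℝ) (hT : 0 < T)
    (SI : ItoIntegral P F w T)
    (ξ ζ : ℝ → Ω → ℝ)
    (hζm : Measurable (Function.uncurry ζ)) (hζ2 : SqInt P T ζ)
    (hξ : ∀ ω : Ω, ∀ t ∈ Set.Icc (0:ℝ) T, ξ t ω = ξ 0 ω + ∫ r in (0:ℝ)..t, ζ r ω)
    (g h : ℝ → ℝ → Ω → ℝ)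
    (hhm : Measurable fun q : ℝ × ℝ × Ω => h q.1 q.2.1 q.2.2)
    (hg : ∀ t ∈ Set.Icc (0:ℝ) T, ProgMeasurable F (g t) ∧ SqInt P T (g t))
    (hh : ∀ t ∈ Set.Icc (0:ℝ) T, ProgMeasurable F (h t) ∧ SqInt P T (h t))
    (hh2 : Integrable (fun q : ℝ × ℝ × Ω => (h q.1 q.2.1 q.2.2)^2)
      ((volume.restrict (Set.Ioc 0 T)).prod ((volume.restrict (Set.Ioc 0 T)).prod P)))
    (hgrep : ∀ t ∈ Set.Icc (0:ℝ) T,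
      ξ t =ᵐ[P] fun ω => (∫ x, ξ t x ∂P) + SI.toFun (g t) T ω)
    (hhrep : ∀ t ∈ Set.Icc (0:ℝ) T,
      ζ t =ᵐ[P] fun ω => (∫ x, ζ t x ∂P) + SI.toFun (h t) T ω) :
    (∀ t ∈ Set.Icc (0:ℝ) T,
      (fun p : ℝ × Ω => g t p.1 p.2)
        =ᵐ[(volume.restrict (Set.Ioc 0 T)).prod P]
          fun p : ℝ × Ω => g 0 p.1 p.2 + ∫ r in (0:ℝ)..t, h r p.1 p.2)
    ∧ ∃ g' : ℝ → ℝ → Ω → ℝ,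
        (∀ᵐ p ∂((volume.restrict (Set.Ioc 0 T)).prod P),
          ContinuousOn (fun t => g' t p.1 p.2) (Set.Icc 0 T))
        ∧ ∀ t ∈ Set.Icc (0:ℝ) T,
            (fun p : ℝ × Ω => g' t p.1 p.2)
              =ᵐ[(volume.restrict (Set.Ioc 0 T)).prod P] fun p : ℝ × Ω => g t p.1 p.2 := by
  have hkernel : ∀ t ∈ Icc (0:ℝ) T, (fun p : ℝ × Ω => g t p.1 p.2)
      =ᵐ[(volume.restrict (Ioc 0 T)).prod P]
        fun p => g 0 p.1 p.2 + ∫ r in (0:ℝ)..t, h r p.1 p.2 := fun t ht => by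
    filter_upwards [kernel_sub_ae_eq_integral SI ht hζm hζ2 hξ hhm hg hh hh2 hgrep hhrep]
      with p hp
    rw [intervalIntegral.integral_of_le ht.1, ← hp]
    ring
  have hH : Integrable (Function.uncurry fun r (p : ℝ × Ω) => h r p.1 p.2)
      ((volume.restrict (Ioc 0 T)).prod ((volume.restrict (Ioc 0 T)).prod P)) :=
    ((memLp_two_iff_integrable_sq hhm.aestronglyMeasurable).2 hh2).integrable one_le_two
  refine ⟨hkernel, fun t s ω => g 0 s ω + ∫ r in (0:ℝ)..t, h r s ω, ?_,
    fun t ht => (hkernel t ht).symm⟩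
  filter_upwards [ae_continuousOn_primitive hT.le hH] with p hp
  exact continuousOn_const.add hp

/-- Given `ξ_t = ξ_0 + ∫_0^t ζ_r dr` with Itô representations
`ξ_t = 𝔼ξ_t + ∫_0^T g_{t,s} dw_s` and `ζ_t = 𝔼ζ_t + ∫_0^T h_{t,s} dw_s`, for each
`t ∈ [0,T]` one has `g_{t,·} = g_{0,·} + ∫_0^t h_{r,·} dr` as elements of
`L²(Ω × [0,T])`; in particular, for almost every `s` the map `t ↦ g_{t,s}` has a
continuous modification. -/
theorem representation_kernel_regularity
    {mΩ : MeasurableSpace Ω} (P : Measure Ω) [IsProbabilityMeasure P]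
    (F : Filtration ℝ mΩ) (w : ℝ → Ω → ℝ) (T : ℝ) (hT : 0 < T)
    (hw : IsBM P F w) (SI : ItoIntegral P F w T)
    (ξ ζ : ℝ → Ω → ℝ)
    (hζm : Measurable (Function.uncurry ζ)) (hζ2 : SqInt P T ζ)
    (hξ0 : MemLp (ξ 0) 2 P)
    (hξ : ∀ ω : Ω, ∀ t ∈ Set.Icc (0:ℝ) T, ξ t ω = ξ 0 ω + ∫ r in (0:ℝ)..t, ζ r ω)
    (g h : ℝ → ℝ → Ω → ℝ)
    (hgm : Measurable fun q : ℝ × ℝ × Ω => g q.1 q.2.1 q.2.2)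
    (hhm : Measurable fun q : ℝ × ℝ × Ω => h q.1 q.2.1 q.2.2)
    (hg : ∀ t ∈ Set.Icc (0:ℝ) T, ProgMeasurable F (g t) ∧ SqInt P T (g t))
    (hh : ∀ t ∈ Set.Icc (0:ℝ) T, ProgMeasurable F (h t) ∧ SqInt P T (h t))
    (hh2 : Integrable (fun q : ℝ × ℝ × Ω => (h q.1 q.2.1 q.2.2)^2)
      ((volume.restrict (Set.Ioc 0 T)).prod ((volume.restrict (Set.Ioc 0 T)).prod P)))
    (hgrep : ∀ t ∈ Set.Icc (0:ℝ) T,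
      ξ t =ᵐ[P] fun ω => (∫ x, ξ t x ∂P) + SI.toFun (g t) T ω)
    (hhrep : ∀ t ∈ Set.Icc (0:ℝ) T,
      ζ t =ᵐ[P] fun ω => (∫ x, ζ t x ∂P) + SI.toFun (h t) T ω) :
    (∀ t ∈ Set.Icc (0:ℝ) T,
      (fun p : ℝ × Ω => g t p.1 p.2)
        =ᵐ[(volume.restrict (Set.Ioc 0 T)).prod P]
          fun p : ℝ × Ω => g 0 p.1 p.2 + ∫ r in (0:ℝ)..t, h r p.1 p.2)
    ∧ ∃ g' : ℝ → ℝ → Ω → ℝ,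
        (∀ᵐ p ∂((volume.restrict (Set.Ioc 0 T)).prod P),
          ContinuousOn (fun t => g' t p.1 p.2) (Set.Icc 0 T))
        ∧ ∀ t ∈ Set.Icc (0:ℝ) T,
            (fun p : ℝ × Ω => g' t p.1 p.2)
              =ᵐ[(volume.restrict (Set.Ioc 0 T)).prod P] fun p : ℝ × Ω => g t p.1 p.2 :=
  representation_kernel_regularity_general P F w T hT SI ξ ζ hζm hζ2 hξ g h hhm hg hh hh2 hgrep
    hhrep
end

section
/- Let $h:C[0,t]\to\mathbb{R}$ belong to class $\mathcal{A}_t$ and admit a continuous extension to the space $D[0,t]$ of càdlàg paths with the Skorokhod topology. Then for every $c \in C[0,t]$, the Dupire vertical derivative $\lim_{\epsilon\to 0} \frac{h(c + \epsilon e_t) - h(c)}{\epsilon}$, where $e_t(s) = \mathbf{1}_{\{s=t\}}$, exists and equals $\partial_{c_t}h(c)$. -/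
open MeasureTheory Filter Set

/-- The sup norm `‖z‖ = sup_{s ∈ [0,T]} |z s|` of a path, as used on `C[0,T]`. -/
noncomputable def supNorm (T : ℝ) (z : ℝ → ℝ) : ℝ :=
  ⨆ s : Set.Icc (0:ℝ) T, |z s|

/-- A functional `h` on paths belongs to the class `𝒜_t` at `c`, with vertical part `dh`
(an atom at `t`) and absolutely continuous part `δh`, if its (Fréchet) derivative at `c`
has the form
`h(c+z) = h(c) + dh ⬝ z_t + ∫_0^t δh(s) z_s ds + o(‖z‖)` as `‖z‖ → 0`. -/
def MemClassA (T t : ℝ) (h : (ℝ → ℝ) → ℝ) (c : ℝ → ℝ) (dh : ℝ) (δh : ℝ → ℝ) : Prop :=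
  IntegrableOn δh (Set.Icc 0 t) volume ∧
  ∀ ε > (0:ℝ), ∃ δ > (0:ℝ), ∀ z : ℝ → ℝ, Continuous z →
    (∀ s ∈ Set.Icc (0:ℝ) T, |z s| ≤ δ) →
    |h (fun s => c s + z s) - h c - (dh * z t + ∫ s in (0:ℝ)..t, δh s * z s)|
      ≤ ε * supNorm T z

/-!
Approximate the vertical bump `x ⬝ e_t` by the continuous ramps `x ⬝ r_n = x ⬝ ramp t n`,
which vanish before `t - 1/(n+1)`, equal `x` at `t` and have sup norm at most `|x|`. For
small `x` the class `𝒜_t` expansion gives `|h(c + x r_n) - h(c) - ∂h ⬝ x - ∫ δh ⬝ x r_n| ≤ ε |x|`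
uniformly in `n`. As `n → ∞` the ramps tend to `0` off `t`, so the integral term vanishes
by dominated convergence, while `h(c + x r_n) = H(c + x r_n) → H(c + x e_t)` by continuity
of the extension. Thus `x ↦ H(c + x e_t)` is differentiable at `0` with derivative `∂h`.
-/

open Topology

def ramp (t : ℝ) (n : ℕ) (s : ℝ) : ℝ := max 0 (min 1 ((s - t) * ((n : ℝ) + 1) + 1))

lemma continuous_ramp (t : ℝ) (n : ℕ) : Continuous (ramp t n) := by
  unfold ramp; fun_prop

lemma ramp_mem_Icc (t : ℝ) (n : ℕ) (s : ℝ) : ramp t n s ∈ Icc (0 : ℝ) 1 :=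
  ⟨le_max_left _ _, max_le zero_le_one (min_le_left _ _)⟩

lemma abs_ramp_le_one (t : ℝ) (n : ℕ) (s : ℝ) : |ramp t n s| ≤ 1 :=
  abs_le.2 ⟨by linarith [(ramp_mem_Icc t n s).1], (ramp_mem_Icc t n s).2⟩

lemma ramp_self (t : ℝ) (n : ℕ) : ramp t n t = 1 := by
  simp [ramp]

lemma ramp_eq_zero_of_le {t s : ℝ} {n : ℕ} (hs : s ≤ t - 1 / ((n : ℝ) + 1)) :
    ramp t n s = 0 := by
  have hn : (0 : ℝ) < (n : ℝ) + 1 := by positivity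
  have hneg : (s - t) * ((n : ℝ) + 1) + 1 ≤ 0 := by
    rw [le_sub_comm, div_le_iff₀ hn] at hs
    linarith
  exact max_eq_left ((min_le_right _ _).trans hneg)

lemma tendsto_ramp_of_lt {t s : ℝ} (hs : s < t) :
    Tendsto (fun n => ramp t n s) atTop (𝓝 0) := by
  have hsmall : ∀ᶠ n : ℕ in atTop, 1 / ((n : ℝ) + 1) ≤ t - s :=
    tendsto_one_div_add_atTop_nhds_zero_nat.eventually (eventually_le_nhds (by linarith))
  refine tendsto_const_nhds.congr' ?_
  filter_upwards [hsmall] with n hn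
  rw [ramp_eq_zero_of_le (by linarith)]

lemma supNorm_le {T a : ℝ} (hT : 0 ≤ T) {z : ℝ → ℝ} (hz : ∀ s, |z s| ≤ a) :
    supNorm T z ≤ a :=
  have : Nonempty (Icc (0 : ℝ) T) := ⟨⟨0, le_rfl, hT⟩⟩
  ciSup_le fun s => hz s

lemma tendsto_intervalIntegral_mul_of_tendsto_zero {f : ℝ → ℝ} {g : ℕ → ℝ → ℝ} {a b C : ℝ}
    (hab : a ≤ b) (hf : IntegrableOn f (Icc a b)) (hg : ∀ n, Continuous (g n))
    (hC : ∀ n s, |g n s| ≤ C) (hlim : ∀ s < b, Tendsto (fun n => g n s) atTop (𝓝 0)) :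
    Tendsto (fun n => ∫ s in a..b, f s * g n s) atTop (𝓝 0) := by
  have hf' : IntervalIntegrable f volume a b :=
    (intervalIntegrable_iff_integrableOn_Icc_of_le hab).2 hf
  have hlim_ae : ∀ᵐ s, s ∈ uIoc a b → Tendsto (fun n => f s * g n s) atTop (𝓝 0) := by
    filter_upwards [Measure.ae_ne volume b] with s hsb hs
    have hs_lt : s < b := lt_of_le_of_ne (uIoc_of_le hab ▸ hs).2 hsb
    simpa using (hlim s hs_lt).const_mul (f s)
  simpa using intervalIntegral.tendsto_integral_filter_of_dominated_convergence
    (fun s => |f s| * C)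
    (.of_forall fun n => by
      rw [uIoc_of_le hab]; exact hf'.1.aestronglyMeasurable.mul (hg n).aestronglyMeasurable)
    (.of_forall fun n => .of_forall fun s _ => by
      rw [Real.norm_eq_abs, abs_mul]
      exact mul_le_mul_of_nonneg_left (hC n s) (abs_nonneg _))
    (hf'.abs.mul_const C) hlim_ae

lemma MemClassA.abs_sub_le_of_tendsto_ramp {t : ℝ} (ht : 0 ≤ t) {h : (ℝ → ℝ) → ℝ}
    {c : ℝ → ℝ} {dh : ℝ} {δh : ℝ → ℝ} (hA : MemClassA t t h c dh δh) {ε : ℝ} (hε : 0 < ε) :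
    ∃ δ > 0, ∀ x, |x| ≤ δ → ∀ L,
      Tendsto (fun n => h fun s => c s + x * ramp t n s) atTop (𝓝 L) →
        |L - h c - dh * x| ≤ ε * |x| := by
  obtain ⟨hδh, hexp⟩ := hA
  obtain ⟨δ, hδ, hδexp⟩ := hexp ε hε
  refine ⟨δ, hδ, fun x hx L hL => ?_⟩
  have hbump_le : ∀ n s, |x * ramp t n s| ≤ |x| := fun n s => by
    rw [abs_mul]; exact mul_le_of_le_one_right (abs_nonneg x) (abs_ramp_le_one t n s)
  have hbound : ∀ n, |(h fun s => c s + x * ramp t n s) - h c -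
      (dh * x + ∫ s in (0 : ℝ)..t, δh s * (x * ramp t n s))| ≤ ε * |x| := fun n => by
    have hn := hδexp (fun s => x * ramp t n s) (continuous_const.mul (continuous_ramp t n))
      fun s _ => (hbump_le n s).trans hx
    rw [ramp_self, mul_one] at hn
    exact hn.trans (mul_le_mul_of_nonneg_left (supNorm_le ht (hbump_le n)) hε.le)
  have hintegral := tendsto_intervalIntegral_mul_of_tendsto_zero ht hδh
    (fun n => continuous_const.mul (continuous_ramp t n)) hbump_le
    fun s hs => by simpa using (tendsto_ramp_of_lt hs).const_mul x
  have hlim := (hL.sub_const (h c)).sub (hintegral.const_add (dh * x))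
  rw [add_zero] at hlim
  exact le_of_tendsto hlim.abs (.of_forall hbound)

/-- Let `h` be a path functional of class `𝒜_t` (at every continuous
path, with vertical part `dh c` and absolutely continuous part `δh c`) admitting a
continuous extension `H` to the space `D[0,t]` of càdlàg paths with the Skorokhod
topology.  (The Skorokhod continuity of `H` is encoded through its sequential
continuity along continuous monotone approximations of the vertical bump `c + ε e_t`,
`e_t = 1_{{t}}`, which is how it is used.)  Then for every continuous `c` the Dupire
vertical derivative `lim_{ε→0} (h(c + ε e_t) - h(c))/ε` exists and equals
`∂_{c_t} h(c) = dh c`. -/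
theorem vertical_derivative_of_classA
    (t : ℝ) (ht : 0 < t) (h H : (ℝ → ℝ) → ℝ)
    (hext : ∀ c : ℝ → ℝ, ContinuousOn c (Set.Icc 0 t) → H c = h c)
    (hHcont : ∀ c : ℝ → ℝ, ContinuousOn c (Set.Icc 0 t) → ∀ ε : ℝ, ∀ z : ℕ → ℝ → ℝ,
      (∀ n, Continuous (z n)) → (∀ (n : ℕ) (s : ℝ), 0 ≤ z n s ∧ z n s ≤ 1) →
      (∀ (n : ℕ) (s : ℝ), s ≤ t - 1 / ((n : ℝ) + 1) → z n s = 0) → (∀ n, z n t = 1) →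
      Filter.Tendsto (fun n => H fun s => c s + ε * z n s) Filter.atTop
        (nhds (H fun s => c s + ε * if s = t then 1 else 0)))
    (dh : (ℝ → ℝ) → ℝ) (δh : (ℝ → ℝ) → ℝ → ℝ)
    (hA : ∀ c : ℝ → ℝ, Continuous c → MemClassA t t h c (dh c) (δh c)) :
    ∀ c : ℝ → ℝ, Continuous c →
      Filter.Tendsto
        (fun ε : ℝ => ((H fun s => c s + ε * if s = t then 1 else 0) - h c) / ε)
        (nhdsWithin 0 {(0:ℝ)}ᶜ) (nhds (dh c)) := by
  intro c hc
  set bump : ℝ → ℝ → ℝ := fun x s => c s + x * if s = t then 1 else 0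
  have hbump_zero : H (bump 0) = h c := by
    simpa [bump] using hext c hc.continuousOn
  have hramp_lim : ∀ x, Tendsto (fun n => h fun s => c s + x * ramp t n s) atTop
      (𝓝 (H (bump x))) := fun x =>
    (hHcont c hc.continuousOn x (ramp t) (continuous_ramp t) (ramp_mem_Icc t)
      (fun _ _ => ramp_eq_zero_of_le) (ramp_self t)).congr fun n =>
      hext _ (hc.add (continuous_const.mul (continuous_ramp t n))).continuousOn
  have hderiv : HasDerivAt (fun x => H (bump x)) (dh c) 0 := by
    refine hasDerivAt_iff_isLittleO_nhds_zero.2 (Asymptotics.isLittleO_iff.2 fun ε hε => ?_)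
    obtain ⟨δ, hδ, hest⟩ := (hA c hc).abs_sub_le_of_tendsto_ramp ht.le hε
    filter_upwards [Metric.closedBall_mem_nhds 0 hδ] with x hx
    rw [zero_add, hbump_zero, smul_eq_mul, mul_comm x, Real.norm_eq_abs, Real.norm_eq_abs]
    exact hest x (by simpa using hx) _ (hramp_lim x)
  have hslope := hderiv.tendsto_slope_zero
  simp only [zero_add, hbump_zero, smul_eq_mul] at hslope
  simpa only [div_eq_inv_mul] using hslope
end
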